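/- arXiv:1507.05266 — 3 statements merged into one kernel-verified Lean document; each statement's English description precedes it below -/
import Mathlib

section
/- Let R ∈ ℂ^{N×N} be Hermitian positive definite, let E_t ∈ ℂ^{N×t} and E_r ∈ ℂ^{N×r} have full column rank, and suppose A = [E_t E_r] ∈ ℂ^{N×(t+r)} has full column rank. Let Γ = (A† R⁻¹ A)⁻¹ be partitioned into 2×2 blocks conformally with (t, r), with Γ₂₂ its lower-right r×r block. Set Ā₁ = R^{-1/2}A and Ā₀ = R^{-1/2}E_t. Then P_{Ā₀}^⊥ · R^{-1/2} E_r Γ₂₂ E_r† R^{-1/2} · P_{Ā₀}^⊥ = P_{Ā₁} − P_{Ā₀}. -/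
open Matrix
open scoped ComplexOrder

noncomputable section

/-- Orthogonal projector onto the column space of `F`: `P_F = F (Fᴴ F)⁻¹ Fᴴ`. -/
def proj {n m : Type*} [Fintype n] [Fintype m] [DecidableEq n] [DecidableEq m]
    (F : Matrix n m ℂ) : Matrix n n ℂ :=
  F * (Fᴴ * F)⁻¹ * Fᴴ

/-- Complementary projector `P_F^⊥ = I - P_F`. -/
def projPerp {n m : Type*} [Fintype n] [Fintype m] [DecidableEq n] [DecidableEq m]
    (F : Matrix n m ℂ) : Matrix n n ℂ :=
  1 - proj F

/-! Whitening by `R^{-1/2}` turns `Aᴴ R⁻¹ A` into the Gram matrix of `Ā₁ = [Ā₀ B]` with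
`B = R^{-1/2} E_r`. Right multiplication of `Ā₁` by the unipotent block matrix
`[[1, -(Ā₀ᴴ Ā₀)⁻¹ Ā₀ᴴ B], [0, 1]]` replaces `B` by `C = P_{Ā₀}^⊥ B` without changing the column
space, and `C` is orthogonal to `Ā₀`, so `P_{Ā₁} = P_{Ā₀} + P_C`. The same change of basis
block-diagonalises the Gram matrix, which shows `Γ₂₂ = (Cᴴ C)⁻¹`; hence the left-hand side is
`C (Cᴴ C)⁻¹ Cᴴ = P_C`. -/

lemma mulVec_injective_of_rank_eq_card {n m : Type*} [Fintype m] {F : Matrix n m ℂ}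
    (h : F.rank = Fintype.card m) : Function.Injective F.mulVec := by
  rw [mulVec_injective_iff, linearIndependent_iff_card_eq_finrank_span,
    Set.finrank, ← rank_eq_finrank_span_cols, h]

lemma mulVec_injective_mul_of_isUnit_det {n m : Type*} [Fintype m] [DecidableEq m]
    {F : Matrix n m ℂ} (hF : Function.Injective F.mulVec) {T : Matrix m m ℂ}
    (hT : IsUnit T.det) : Function.Injective (F * T).mulVec := by
  have hT' : Function.Injective T.mulVec :=
    mulVec_injective_of_isUnit ((isUnit_iff_isUnit_det T).mpr hT)
  rw [show (F * T).mulVec = F.mulVec ∘ T.mulVec from funext fun v => (mulVec_mulVec v F T).symm]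
  exact hF.comp hT'

lemma inv_eq_mul_inv_conjTranspose_mul_mul {m : Type*} [Fintype m] [DecidableEq m]
    (M : Matrix m m ℂ) {T : Matrix m m ℂ} (hT : IsUnit T.det) :
    M⁻¹ = T * (Tᴴ * M * T)⁻¹ * Tᴴ := by
  have hTH : IsUnit Tᴴ.det := by rwa [det_conjTranspose, isUnit_star]
  rw [Matrix.mul_inv_rev, Matrix.mul_inv_rev]
  simp only [Matrix.mul_assoc, mul_nonsing_inv_cancel_left _ _ hT,
    nonsing_inv_mul _ hTH, Matrix.mul_one]

lemma det_fromBlocks_one_zero_one {m k : Type*} [Fintype m] [Fintype k] [DecidableEq m]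
    [DecidableEq k] (X : Matrix m k ℂ) :
    (fromBlocks 1 X 0 1 : Matrix (m ⊕ k) (m ⊕ k) ℂ).det = 1 := by
  simp

section Gram

variable {n m k : Type*} [Fintype n] [Fintype m] [Fintype k] [DecidableEq m] [DecidableEq k]

lemma isUnit_det_gram_of_mulVec_injective_fromCols {F : Matrix n m ℂ} {G : Matrix n k ℂ}
    (h : Function.Injective (fromCols F G).mulVec) :
    IsUnit (Fᴴ * F).det ∧ IsUnit (Gᴴ * G).det := by
  have hpos := PosDef.conjTranspose_mul_self _ h
  rw [conjTranspose_fromCols_eq_fromRows_conjTranspose, fromRows_mul_fromCols] at hpos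
  exact ⟨isUnit_iff_ne_zero.mpr (hpos.submatrix Sum.inl_injective).det_pos.ne',
    isUnit_iff_ne_zero.mpr (hpos.submatrix Sum.inr_injective).det_pos.ne'⟩

lemma inv_gram_fromCols_of_conjTranspose_mul_eq_zero {F : Matrix n m ℂ} {C : Matrix n k ℂ}
    (hFC : Fᴴ * C = 0) (hF : IsUnit (Fᴴ * F).det) (hC : IsUnit (Cᴴ * C).det) :
    ((fromCols F C)ᴴ * fromCols F C)⁻¹ = fromBlocks (Fᴴ * F)⁻¹ 0 0 (Cᴴ * C)⁻¹ := by
  have hCF : Cᴴ * F = 0 := by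
    rw [← conjTranspose_conjTranspose F, ← conjTranspose_mul, hFC, conjTranspose_zero]
  rw [conjTranspose_fromCols_eq_fromRows_conjTranspose, fromRows_mul_fromCols, hFC, hCF,
    inv_fromBlocks_zero₂₁_of_isUnit_iff _ _ _
      (iff_of_true ((isUnit_iff_isUnit_det _).mpr hF) ((isUnit_iff_isUnit_det _).mpr hC))]
  simp

end Gram

section Projector

variable {n m k : Type*} [Fintype n] [Fintype m] [Fintype k]
  [DecidableEq n] [DecidableEq m] [DecidableEq k]

lemma proj_mul_of_isUnit_det (F : Matrix n m ℂ) {T : Matrix m m ℂ} (hT : IsUnit T.det) :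
    proj (F * T) = proj F := by
  have hTH : IsUnit Tᴴ.det := by rwa [det_conjTranspose, isUnit_star]
  have hgram : ((F * T)ᴴ * (F * T))⁻¹ = T⁻¹ * ((Fᴴ * F)⁻¹ * Tᴴ⁻¹) := by
    rw [conjTranspose_mul, Matrix.mul_assoc, ← Matrix.mul_assoc Fᴴ, Matrix.mul_inv_rev,
      Matrix.mul_inv_rev, Matrix.mul_assoc]
  rw [proj, proj, hgram, conjTranspose_mul]
  simp only [Matrix.mul_assoc, mul_nonsing_inv_cancel_left _ _ hT,
    nonsing_inv_mul_cancel_left _ _ hTH]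

lemma isHermitian_projPerp (F : Matrix n m ℂ) : (projPerp F).IsHermitian := by
  refine isHermitian_one.sub ?_
  simp only [IsHermitian, proj, conjTranspose_mul, conjTranspose_conjTranspose,
    (isHermitian_conjTranspose_mul_self F).inv.eq, Matrix.mul_assoc]

lemma conjTranspose_mul_projPerp {F : Matrix n m ℂ} (hF : IsUnit (Fᴴ * F).det) :
    Fᴴ * projPerp F = 0 := by
  rw [projPerp, proj, Matrix.mul_sub, Matrix.mul_one, ← Matrix.mul_assoc, ← Matrix.mul_assoc,
    mul_nonsing_inv _ hF, Matrix.one_mul, sub_self]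

lemma fromCols_mul_fromBlocks_one_zero_one (F : Matrix n m ℂ) (G : Matrix n k ℂ) :
    fromCols F G * (fromBlocks 1 (-((Fᴴ * F)⁻¹ * Fᴴ * G)) 0 1 : Matrix (m ⊕ k) (m ⊕ k) ℂ) =
      fromCols F (projPerp F * G) := by
  rw [fromCols_mul_fromBlocks]
  simp only [projPerp, proj, Matrix.mul_one, Matrix.mul_zero, add_zero, Matrix.mul_neg,
    Matrix.sub_mul, Matrix.one_mul, Matrix.mul_assoc]
  abel_nf

lemma proj_fromCols_of_conjTranspose_mul_eq_zero {F : Matrix n m ℂ} {C : Matrix n k ℂ}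
    (hFC : Fᴴ * C = 0) (hF : IsUnit (Fᴴ * F).det) (hC : IsUnit (Cᴴ * C).det) :
    proj (fromCols F C) = proj F + proj C := by
  rw [proj, inv_gram_fromCols_of_conjTranspose_mul_eq_zero hFC hF hC,
    conjTranspose_fromCols_eq_fromRows_conjTranspose, fromCols_mul_fromBlocks,
    fromCols_mul_fromRows]
  simp [proj]

lemma toBlocks₂₂_inv_gram_fromCols {F : Matrix n m ℂ} {G : Matrix n k ℂ}
    (hF : IsUnit (Fᴴ * F).det) (hC : IsUnit ((projPerp F * G)ᴴ * (projPerp F * G)).det) :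
    ((fromCols F G)ᴴ * fromCols F G)⁻¹.toBlocks₂₂ = ((projPerp F * G)ᴴ * (projPerp F * G))⁻¹ := by
  have horth : Fᴴ * (projPerp F * G) = 0 := by
    rw [← Matrix.mul_assoc, conjTranspose_mul_projPerp hF, Matrix.zero_mul]
  set T : Matrix (m ⊕ k) (m ⊕ k) ℂ := fromBlocks 1 (-((Fᴴ * F)⁻¹ * Fᴴ * G)) 0 1 with hT_def
  have hT : IsUnit T.det := by rw [hT_def, det_fromBlocks_one_zero_one]; exact isUnit_one
  have hgram : Tᴴ * ((fromCols F G)ᴴ * fromCols F G) * T =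
      (fromCols F (projPerp F * G))ᴴ * fromCols F (projPerp F * G) := by
    rw [hT_def, ← fromCols_mul_fromBlocks_one_zero_one, conjTranspose_mul]
    simp only [Matrix.mul_assoc]
  rw [inv_eq_mul_inv_conjTranspose_mul_mul _ hT, hgram,
    inv_gram_fromCols_of_conjTranspose_mul_eq_zero horth hF hC, hT_def, fromBlocks_conjTranspose]
  simp [fromBlocks_multiply]

theorem projPerp_mul_mul_projPerp_eq_proj_fromCols_sub_proj {F : Matrix n m ℂ}
    {G : Matrix n k ℂ} (h : Function.Injective (fromCols F G).mulVec) :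
    projPerp F * (G * ((fromCols F G)ᴴ * fromCols F G)⁻¹.toBlocks₂₂ * Gᴴ) * projPerp F =
      proj (fromCols F G) - proj F := by
  set C := projPerp F * G
  set T : Matrix (m ⊕ k) (m ⊕ k) ℂ := fromBlocks 1 (-((Fᴴ * F)⁻¹ * Fᴴ * G)) 0 1 with hT_def
  have hT : IsUnit T.det := by rw [hT_def, det_fromBlocks_one_zero_one]; exact isUnit_one
  have hFC : fromCols F G * T = fromCols F C := fromCols_mul_fromBlocks_one_zero_one F G
  obtain ⟨hF, hC⟩ :=
    isUnit_det_gram_of_mulVec_injective_fromCols (hFC ▸ mulVec_injective_mul_of_isUnit_det h hT)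
  have horth : Fᴴ * C = 0 := by
    rw [← Matrix.mul_assoc, conjTranspose_mul_projPerp hF, Matrix.zero_mul]
  calc projPerp F * (G * ((fromCols F G)ᴴ * fromCols F G)⁻¹.toBlocks₂₂ * Gᴴ) * projPerp F
      = C * (Cᴴ * C)⁻¹ * Cᴴ := by
        rw [toBlocks₂₂_inv_gram_fromCols hF hC, conjTranspose_mul, (isHermitian_projPerp F).eq]
        simp only [C, Matrix.mul_assoc]
    _ = proj (fromCols F C) - proj F := by
        rw [proj_fromCols_of_conjTranspose_mul_eq_zero horth hF hC, add_sub_cancel_left, proj]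
    _ = proj (fromCols F G) - proj F := by rw [← hFC, proj_mul_of_isUnit_det _ hT]

end Projector

lemma Matrix.PosSemidef.cfc_sqrt_mul_self {n : Type*} [Fintype n] [DecidableEq n]
    {R : Matrix n n ℂ} (hR : R.PosSemidef) : cfc Real.sqrt R * cfc Real.sqrt R = R := by
  rw [← cfc_mul ..]
  conv_rhs => rw [← cfc_id' ℝ R hR.isHermitian]
  refine cfc_congr fun x hx => ?_
  rw [hR.isHermitian.spectrum_real_eq_range_eigenvalues] at hx
  obtain ⟨i, rfl⟩ := hx
  exact Real.mul_self_sqrt (hR.eigenvalues_nonneg i)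

lemma conjTranspose_mul_inv_mul_self_mul {n m : Type*} [Fintype n] [DecidableEq n]
    {S : Matrix n n ℂ} (hS : S.IsHermitian) (A : Matrix n m ℂ) :
    Aᴴ * (S * S)⁻¹ * A = (S⁻¹ * A)ᴴ * (S⁻¹ * A) := by
  rw [conjTranspose_mul, conjTranspose_nonsing_inv, hS.eq, Matrix.mul_inv_rev]
  simp only [Matrix.mul_assoc]

theorem projector_difference_identity_general
    {n : Type*} [Fintype n] [DecidableEq n] (t r : ℕ)
    (R : Matrix n n ℂ) (hR : R.PosDef)
    (Et : Matrix n (Fin t) ℂ) (Er : Matrix n (Fin r) ℂ)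
    (hA : (fromCols Et Er).rank = t + r) :
    let A : Matrix n (Fin t ⊕ Fin r) ℂ := fromCols Et Er
    let Γ : Matrix (Fin t ⊕ Fin r) (Fin t ⊕ Fin r) ℂ := (Aᴴ * R⁻¹ * A)⁻¹
    let Γ22 : Matrix (Fin r) (Fin r) ℂ := Γ.toBlocks₂₂
    let Rhalf : Matrix n n ℂ := hR.posSemidef.1.eigenvectorUnitary.1 *
      diagonal (((↑) : ℝ → ℂ) ∘ Real.sqrt ∘ hR.posSemidef.1.eigenvalues) *
      (star hR.posSemidef.1.eigenvectorUnitary : Matrix n n ℂ)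
    let Abar1 : Matrix n (Fin t ⊕ Fin r) ℂ := Rhalf⁻¹ * A
    let Abar0 : Matrix n (Fin t) ℂ := Rhalf⁻¹ * Et
    projPerp Abar0 * (Rhalf⁻¹ * Er * Γ22 * Erᴴ * Rhalf⁻¹) * projPerp Abar0 =
      proj Abar1 - proj Abar0 := by
  intro A Γ Γ22 Rhalf Abar1 Abar0
  have hRhalf : Rhalf = cfc Real.sqrt R := by rw [hR.isHermitian.cfc_eq]; rfl
  have hS : Rhalf.IsHermitian := hRhalf ▸ (cfc_predicate Real.sqrt R : IsSelfAdjoint _)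
  have hSS : Rhalf * Rhalf = R := hRhalf ▸ hR.posSemidef.cfc_sqrt_mul_self
  have hdet : IsUnit Rhalf⁻¹.det := by
    refine isUnit_nonsing_inv_det _ (isUnit_of_mul_isUnit_left (y := Rhalf.det) ?_)
    rw [← det_mul, hSS]
    exact isUnit_iff_ne_zero.mpr hR.det_pos.ne'
  have hinj : Function.Injective (fromCols Abar0 (Rhalf⁻¹ * Er)).mulVec := by
    refine mulVec_injective_of_rank_eq_card ?_
    rw [← mul_fromCols, rank_mul_eq_right_of_isUnit_det _ _ hdet, hA, Fintype.card_sum,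
      Fintype.card_fin, Fintype.card_fin]
  have hΓ22 : Γ22 = (Abar1ᴴ * Abar1)⁻¹.toBlocks₂₂ := by
    rw [← conjTranspose_mul_inv_mul_self_mul hS, hSS]
  have hmid : Rhalf⁻¹ * Er * Γ22 * Erᴴ * Rhalf⁻¹ = (Rhalf⁻¹ * Er) * Γ22 * (Rhalf⁻¹ * Er)ᴴ := by
    rw [conjTranspose_mul, conjTranspose_nonsing_inv, hS.eq]
    simp only [Matrix.mul_assoc]
  rw [hmid, hΓ22, show Abar1 = fromCols Abar0 (Rhalf⁻¹ * Er) from mul_fromCols _ _ _]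
  exact projPerp_mul_mul_projPerp_eq_proj_fromCols_sub_proj hinj

/-- Eqs. (R2)/(W1) of the paper:
`P_{Ā₀}^⊥ R^{-1/2} E_r Γ₂₂ E_rᴴ R^{-1/2} P_{Ā₀}^⊥ = P_{Ā₁} − P_{Ā₀}`. -/
theorem projector_difference_identity
    {n : Type*} [Fintype n] [DecidableEq n] (t r : ℕ) (ht : 0 < t) (hr : 0 < r)
    (R : Matrix n n ℂ) (hR : R.PosDef)
    (Et : Matrix n (Fin t) ℂ) (Er : Matrix n (Fin r) ℂ)
    (hEt : Et.rank = t) (hEr : Er.rank = r)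
    (hA : (fromCols Et Er).rank = t + r) :
    let A : Matrix n (Fin t ⊕ Fin r) ℂ := fromCols Et Er
    let Γ : Matrix (Fin t ⊕ Fin r) (Fin t ⊕ Fin r) ℂ := (Aᴴ * R⁻¹ * A)⁻¹
    let Γ22 : Matrix (Fin r) (Fin r) ℂ := Γ.toBlocks₂₂
    let Rhalf : Matrix n n ℂ := hR.posSemidef.1.eigenvectorUnitary.1 *
      diagonal (((↑) : ℝ → ℂ) ∘ Real.sqrt ∘ hR.posSemidef.1.eigenvalues) *
      (star hR.posSemidef.1.eigenvectorUnitary : Matrix n n ℂ)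
    let Abar1 : Matrix n (Fin t ⊕ Fin r) ℂ := Rhalf⁻¹ * A
    let Abar0 : Matrix n (Fin t) ℂ := Rhalf⁻¹ * Et
    projPerp Abar0 * (Rhalf⁻¹ * Er * Γ22 * Erᴴ * Rhalf⁻¹) * projPerp Abar0 =
      proj Abar1 - proj Abar0 :=
  projector_difference_identity_general t r R hR Et Er hA
end
end

section
/- In the I-GMANOVA setup, let R̂₀ = K⁻¹(S_c + S_c^{1/2} P_{A₀}^⊥ Z_{W1} P_{C†} Z_{W1}† P_{A₀}^⊥ S_c^{1/2}), which is Hermitian positive definite, define Z_{d,0} = Z − S_c^{1/2} P_{A₀} S_c^{-1/2} Z P_{C†}, Z_{W0} = R̂₀^{-1/2} Z, and Ā₀ = R̂₀^{-1/2} E_t. Then R̂₀^{-1/2} Z_{d,0} P_{C†} = P_{Ā₀}^⊥ Z_{W0} P_{C†}. -/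
open Matrix
open scoped ComplexOrder

noncomputable section

/-- The square root of a positive semidefinite matrix, as `Matrix.PosSemidef.sqrt` was defined in
Mathlib (December 2024); it has since been removed from Mathlib. -/
def Matrix.PosSemidef.sqrt {n 𝕜 : Type*} [Fintype n] [RCLike 𝕜] [DecidableEq n]
    {A : Matrix n n 𝕜} (hA : A.PosSemidef) : Matrix n n 𝕜 :=
  hA.1.eigenvectorUnitary.1 * diagonal ((↑) ∘ (√·) ∘ hA.1.eigenvalues) *
    (star hA.1.eigenvectorUnitary : Matrix n n 𝕜)

/-!
Write `Π_W = E (Eᴴ W E)⁻¹ Eᴴ W` (`weightedProj W E`) for the `W`-orthogonal projector onto the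
span of `E = E_t`. Undoing the whitening turns `S_c^{1/2} P_{A₀} S_c^{-1/2}` into `Π_{S_c⁻¹}` and
`R̂₀^{1/2} P_{Ā₀} R̂₀^{-1/2}` into `Π_{R̂₀⁻¹}`, so, `P_{Cᴴ}` being idempotent, the two sides are
`R̂₀^{-1/2} (I - Π_W) Z P_{Cᴴ}` for `W = S_c⁻¹` and for `W = R̂₀⁻¹`. For Hermitian `W`, `Π_W`
depends only on `W E` up to a nonzero real factor, and `R̂₀⁻¹ E_t = K S_c⁻¹ E_t` because the
correction term of `R̂₀` ends in `P_{A₀}^⊥ S_c^{1/2}`, while `S_c^{1/2} S_c⁻¹ E_t = A₀` is killed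
by `P_{A₀}^⊥`.
-/

namespace Matrix

namespace PosSemidef

variable {n 𝕜 : Type*} [Fintype n] [RCLike 𝕜] [DecidableEq n] {A : Matrix n n 𝕜}

lemma conjTranspose_sqrt (hA : A.PosSemidef) : (hA.sqrt)ᴴ = hA.sqrt := by
  simp [Matrix.PosSemidef.sqrt, conjTranspose_mul, Matrix.mul_assoc, diagonal_conjTranspose,
    Function.comp_def, star_eq_conjTranspose, Pi.star_def]

lemma sqrt_mul_self (hA : A.PosSemidef) : hA.sqrt * hA.sqrt = A := by
  set U : Matrix n n 𝕜 := hA.1.eigenvectorUnitary.1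
  set D : Matrix n n 𝕜 := diagonal ((↑) ∘ (√·) ∘ hA.1.eigenvalues)
  have hU : star U * U = 1 := Unitary.coe_star_mul_self _
  have hD : D * D = diagonal (RCLike.ofReal ∘ hA.1.eigenvalues) := by
    rw [diagonal_mul_diagonal]
    congr 1
    funext i
    simp only [Function.comp_apply, ← RCLike.ofReal_mul,
      Real.mul_self_sqrt (hA.eigenvalues_nonneg i)]
  conv_rhs => rw [hA.1.spectral_theorem, Unitary.conjStarAlgAut_apply]
  calc hA.sqrt * hA.sqrt = U * (D * (star U * U) * D) * star U := by
        simp only [Matrix.PosSemidef.sqrt, U, D, Matrix.mul_assoc]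
    _ = _ := by rw [hU, Matrix.mul_one, hD]

end PosSemidef

lemma PosDef.isUnit_det_sqrt {n 𝕜 : Type*} [Fintype n] [RCLike 𝕜] [DecidableEq n]
    {A : Matrix n n 𝕜} (hA : A.PosDef) : IsUnit hA.posSemidef.sqrt.det := by
  refine isUnit_of_mul_isUnit_left (y := hA.posSemidef.sqrt.det) ?_
  rw [← det_mul, hA.posSemidef.sqrt_mul_self]
  exact (isUnit_iff_isUnit_det A).mp hA.isUnit

lemma mulVec_injective_ite_val_eq {R : Type*} [NonAssocSemiring R] {a N : ℕ} (h : a ≤ N) :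
    Function.Injective
      (of fun (i : Fin N) (j : Fin a) => if (i : ℕ) = (j : ℕ) then (1 : R) else 0).mulVec := by
  intro x y hxy
  funext j
  simpa [mulVec, dotProduct, Fin.val_inj] using congrFun hxy (Fin.castLE h j)

variable {n m 𝕜 : Type*} [Fintype n] [DecidableEq n]

lemma nonsing_inv_mul_mul_nonsing_inv [CommRing 𝕜] (A : Matrix n n 𝕜) : A⁻¹ * A * A⁻¹ = A⁻¹ := by
  by_cases h : IsUnit A.det
  · rw [nonsing_inv_mul _ h, Matrix.one_mul]
  · simp [nonsing_inv_apply_not_isUnit _ h]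

lemma conjTranspose_inv_mul_mul_inv_mul [CommRing 𝕜] [StarRing 𝕜] {S : Matrix n n 𝕜}
    (hS : Sᴴ = S) (E : Matrix n m 𝕜) : (S⁻¹ * E)ᴴ * (S⁻¹ * E) = Eᴴ * (S * S)⁻¹ * E := by
  rw [conjTranspose_mul, conjTranspose_nonsing_inv, hS, Matrix.mul_inv_rev]
  simp only [Matrix.mul_assoc]

lemma nonsing_inv_smul_add_mul_of_mul_inv_mul_eq_zero [Field 𝕜] {A W : Matrix n n 𝕜}
    (hA : IsUnit A.det) {E : Matrix n m 𝕜} (hW : W * (A⁻¹ * E) = 0) {c : 𝕜} (hc : c ≠ 0)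
    (hdet : IsUnit (c • (A + W)).det) : (c • (A + W))⁻¹ * E = c⁻¹ • (A⁻¹ * E) := by
  have hright : c • (A + W) * (c⁻¹ • (A⁻¹ * E)) = E := by
    rw [Matrix.smul_mul, Matrix.mul_smul, smul_smul, mul_inv_cancel₀ hc, one_smul, Matrix.add_mul,
      hW, add_zero, mul_nonsing_inv_cancel_left _ _ hA]
  calc (c • (A + W))⁻¹ * E = (c • (A + W))⁻¹ * (c • (A + W) * (c⁻¹ • (A⁻¹ * E))) := by rw [hright]
    _ = c⁻¹ • (A⁻¹ * E) := nonsing_inv_mul_cancel_left _ _ hdet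

end Matrix

section Projection

variable {n m : Type*} [Fintype n] [Fintype m] [DecidableEq n] [DecidableEq m]

lemma conjTranspose_proj (F : Matrix n m ℂ) : (proj F)ᴴ = proj F := by
  simp [proj, conjTranspose_nonsing_inv, Matrix.mul_assoc]

lemma conjTranspose_projPerp (F : Matrix n m ℂ) : (projPerp F)ᴴ = projPerp F := by
  rw [projPerp, conjTranspose_sub, conjTranspose_one, conjTranspose_proj]

lemma proj_mul_proj (F : Matrix n m ℂ) : proj F * proj F = proj F :=
  calc proj F * proj F = F * ((Fᴴ * F)⁻¹ * (Fᴴ * F) * (Fᴴ * F)⁻¹) * Fᴴ := by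
        simp only [proj, Matrix.mul_assoc]
    _ = proj F := by rw [nonsing_inv_mul_mul_nonsing_inv]; rfl

lemma posSemidef_proj (F : Matrix n m ℂ) : (proj F).PosSemidef := by
  simpa [proj, conjTranspose_nonsing_inv] using
    (posSemidef_conjTranspose_mul_self F).inv.mul_mul_conjTranspose_same F

lemma projPerp_mul_self {F : Matrix n m ℂ} (hF : IsUnit (Fᴴ * F).det) : projPerp F * F = 0 := by
  rw [projPerp, Matrix.sub_mul, Matrix.one_mul, proj, Matrix.mul_assoc _ Fᴴ,
    nonsing_inv_mul_cancel_right _ _ hF, sub_self]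

lemma projPerp_inv_mul_mul_mul_inv_mul {S : Matrix n n ℂ} (hS : Sᴴ = S) (hdet : IsUnit S.det)
    {E : Matrix n m ℂ} (hE : IsUnit (Eᴴ * (S * S)⁻¹ * E).det) :
    projPerp (S⁻¹ * E) * (S * ((S * S)⁻¹ * E)) = 0 := by
  rw [Matrix.mul_inv_rev, Matrix.mul_assoc S⁻¹, mul_nonsing_inv_cancel_left _ _ hdet]
  exact projPerp_mul_self (by rwa [conjTranspose_inv_mul_mul_inv_mul hS])

end Projection

section WeightedProjection

variable {n m : Type*} [Fintype n] [Fintype m] [DecidableEq m]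

def weightedProj (W : Matrix n n ℂ) (E : Matrix n m ℂ) : Matrix n n ℂ :=
  E * (Eᴴ * W * E)⁻¹ * Eᴴ * W

lemma weightedProj_eq_of_mul_eq {W W' : Matrix n n ℂ} (hW : Wᴴ = W) (hW' : W'ᴴ = W')
    {E : Matrix n m ℂ} (hdet : IsUnit (Eᴴ * W * E).det) {c : ℂ} (hc : IsSelfAdjoint c)
    (hc0 : c ≠ 0) (h : W' * E = c • (W * E)) : weightedProj W' E = weightedProj W E := by
  have hrow : Eᴴ * W' = c • (Eᴴ * W) := by
    simpa [conjTranspose_mul, hW, hW', hc.star_eq] using congrArg conjTranspose h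
  have hinv : (c • (Eᴴ * W * E))⁻¹ = c⁻¹ • (Eᴴ * W * E)⁻¹ := by
    let _ := invertibleOfNonzero hc0
    rw [inv_smul _ _ hdet, invOf_eq_inv]
  rw [weightedProj, weightedProj, Matrix.mul_assoc _ Eᴴ W', hrow, Matrix.smul_mul, hinv]
  simp only [Matrix.smul_mul, Matrix.mul_smul, smul_smul, mul_inv_cancel₀ hc0, one_smul,
    Matrix.mul_assoc]

variable [DecidableEq n]

lemma weightedProj_inv_smul_add_of_mul_inv_mul_eq_zero {A W : Matrix n n ℂ} (hA : A.PosDef)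
    {E : Matrix n m ℂ} (hE : IsUnit (Eᴴ * A⁻¹ * E).det) (hW : W * (A⁻¹ * E) = 0) {c : ℂ}
    (hc : 0 < c) (hcAW : (c • (A + W)).PosDef) :
    weightedProj (c • (A + W))⁻¹ E = weightedProj A⁻¹ E :=
  weightedProj_eq_of_mul_eq hA.inv.1.eq hcAW.inv.1.eq hE (.of_nonneg (inv_pos.2 hc).le)
    (inv_ne_zero hc.ne') <| nonsing_inv_smul_add_mul_of_mul_inv_mul_eq_zero
      ((isUnit_iff_isUnit_det A).mp hA.isUnit) hW hc.ne' ((isUnit_iff_isUnit_det _).mp hcAW.isUnit)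

variable {S : Matrix n n ℂ}

lemma proj_inv_mul (hS : Sᴴ = S) (hdet : IsUnit S.det) (E : Matrix n m ℂ) :
    proj (S⁻¹ * E) = S⁻¹ * weightedProj (S * S)⁻¹ E * S := by
  rw [proj, conjTranspose_inv_mul_mul_inv_mul hS, weightedProj, conjTranspose_mul,
    conjTranspose_nonsing_inv, hS, Matrix.mul_inv_rev]
  simp only [Matrix.mul_assoc, nonsing_inv_mul _ hdet, Matrix.mul_one]

lemma mul_proj_inv_mul_mul_inv (hS : Sᴴ = S) (hdet : IsUnit S.det) (E : Matrix n m ℂ) :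
    S * proj (S⁻¹ * E) * S⁻¹ = weightedProj (S * S)⁻¹ E := by
  rw [proj_inv_mul hS hdet]
  simp only [Matrix.mul_assoc, mul_nonsing_inv _ hdet, Matrix.mul_one,
    mul_nonsing_inv_cancel_left _ _ hdet]

lemma proj_inv_mul_mul_inv (hS : Sᴴ = S) (hdet : IsUnit S.det) (E : Matrix n m ℂ) :
    proj (S⁻¹ * E) * S⁻¹ = S⁻¹ * weightedProj (S * S)⁻¹ E := by
  rw [proj_inv_mul hS hdet, mul_nonsing_inv_cancel_right _ _ hdet]

end WeightedProjection

theorem rao_whitening_identity_general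
    (N K M t r : ℕ) (hK : 0 < K)
    (hJ : t + r ≤ N)
    (Sc : Matrix (Fin N) (Fin N) ℂ) (hS : Sc.PosDef)
    (Z : Matrix (Fin N) (Fin K) ℂ) :
    let Et : Matrix (Fin N) (Fin t) ℂ := Matrix.of fun i j => if (i : ℕ) = (j : ℕ) then 1 else 0
    let C : Matrix (Fin M) (Fin K) ℂ := Matrix.of fun i j => if (i : ℕ) = (j : ℕ) then 1 else 0
    let PC : Matrix (Fin K) (Fin K) ℂ := Cᴴ * (C * Cᴴ)⁻¹ * C
    let Shalf : Matrix (Fin N) (Fin N) ℂ := hS.posSemidef.sqrt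
    let ZW1 : Matrix (Fin N) (Fin K) ℂ := Shalf⁻¹ * Z
    let A0 : Matrix (Fin N) (Fin t) ℂ := Shalf⁻¹ * Et
    let R0 : Matrix (Fin N) (Fin N) ℂ :=
      ((K : ℂ))⁻¹ • (Sc + Shalf * projPerp A0 * ZW1 * PC * ZW1ᴴ * projPerp A0 * Shalf)
    let Zd0 : Matrix (Fin N) (Fin K) ℂ := Z - Shalf * proj A0 * Shalf⁻¹ * Z * PC
    ∃ h0 : R0.PosDef,
      (h0.posSemidef.sqrt)⁻¹ * Zd0 * PC =
        projPerp ((h0.posSemidef.sqrt)⁻¹ * Et) * ((h0.posSemidef.sqrt)⁻¹ * Z) * PC := by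
  intro Et C PC S ZW1 A0 R0 Zd0
  have hSh : Sᴴ = S := hS.posSemidef.conjTranspose_sqrt
  have hSdet : IsUnit S.det := hS.isUnit_det_sqrt
  have hSS : S * S = Sc := hS.posSemidef.sqrt_mul_self
  have hPC : PC = proj Cᴴ := by simp only [PC, proj, conjTranspose_conjTranspose]
  have hGram : IsUnit (Etᴴ * Sc⁻¹ * Et).det := (isUnit_iff_isUnit_det _).mp
    (hS.inv.conjTranspose_mul_mul_same (mulVec_injective_ite_val_eq (by omega))).isUnit
  set W := S * projPerp A0 * ZW1 * PC * ZW1ᴴ * projPerp A0 * S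
  have hW : W.PosSemidef := by
    convert (posSemidef_proj Cᴴ).mul_mul_conjTranspose_same (S * projPerp A0 * ZW1) using 1
    simp only [W, hPC, conjTranspose_mul, conjTranspose_projPerp, hSh, Matrix.mul_assoc]
  have hKinv : (0 : ℂ) < (K : ℂ)⁻¹ := by positivity
  have hR0 : R0.PosDef := (hS.add_posSemidef hW).smul hKinv
  refine ⟨hR0, ?_⟩
  have hWEt : W * (Sc⁻¹ * Et) = 0 := by
    have hA0 : projPerp A0 * (S * ((S * S)⁻¹ * Et)) = 0 :=
      projPerp_inv_mul_mul_mul_inv_mul hSh hSdet (by rwa [hSS])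
    rw [hSS] at hA0
    simp only [W, Matrix.mul_assoc, hA0, Matrix.mul_zero]
  have hweight : weightedProj R0⁻¹ Et = weightedProj Sc⁻¹ Et :=
    weightedProj_inv_smul_add_of_mul_inv_mul_eq_zero hS hGram hWEt hKinv hR0
  set B := hR0.posSemidef.sqrt
  have hBh : Bᴴ = B := hR0.posSemidef.conjTranspose_sqrt
  have hBdet : IsUnit B.det := hR0.isUnit_det_sqrt
  have hBB : B * B = R0 := hR0.posSemidef.sqrt_mul_self
  calc B⁻¹ * Zd0 * PC = B⁻¹ * (Z * PC) - B⁻¹ * (weightedProj Sc⁻¹ Et * (Z * PC)) := by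
        simp only [Zd0]
        rw [mul_proj_inv_mul_mul_inv hSh hSdet, hSS]
        simp only [Matrix.mul_sub, Matrix.sub_mul, Matrix.mul_assoc, hPC, proj_mul_proj]
    _ = projPerp (B⁻¹ * Et) * (B⁻¹ * Z) * PC := by
        rw [projPerp, Matrix.sub_mul, Matrix.sub_mul, Matrix.one_mul, ← Matrix.mul_assoc (proj _),
          proj_inv_mul_mul_inv hBh hBdet, hBB, hweight]
        simp only [Matrix.mul_assoc]

/-- Eq. (R1) of the paper: `R̂₀^{-1/2} Z_{d,0} P_{Cᴴ} = P_{Ā₀}^⊥ Z_{W0} P_{Cᴴ}`,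
where `R̂₀` is Hermitian positive definite. -/
theorem rao_whitening_identity
    (N K M t r : ℕ) (hN : 0 < N) (hK : 0 < K) (hM : 0 < M) (ht : 0 < t) (hr : 0 < r)
    (hJ : t + r ≤ N) (hMK : M ≤ K)
    (Sc : Matrix (Fin N) (Fin N) ℂ) (hS : Sc.PosDef)
    (Z : Matrix (Fin N) (Fin K) ℂ) :
    let Et : Matrix (Fin N) (Fin t) ℂ := Matrix.of fun i j => if (i : ℕ) = (j : ℕ) then 1 else 0
    let C : Matrix (Fin M) (Fin K) ℂ := Matrix.of fun i j => if (i : ℕ) = (j : ℕ) then 1 else 0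
    let PC : Matrix (Fin K) (Fin K) ℂ := Cᴴ * (C * Cᴴ)⁻¹ * C
    let Shalf : Matrix (Fin N) (Fin N) ℂ := hS.posSemidef.sqrt
    let ZW1 : Matrix (Fin N) (Fin K) ℂ := Shalf⁻¹ * Z
    let A0 : Matrix (Fin N) (Fin t) ℂ := Shalf⁻¹ * Et
    let R0 : Matrix (Fin N) (Fin N) ℂ :=
      ((K : ℂ))⁻¹ • (Sc + Shalf * projPerp A0 * ZW1 * PC * ZW1ᴴ * projPerp A0 * Shalf)
    let Zd0 : Matrix (Fin N) (Fin K) ℂ := Z - Shalf * proj A0 * Shalf⁻¹ * Z * PC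
    ∃ h0 : R0.PosDef,
      (h0.posSemidef.sqrt)⁻¹ * Zd0 * PC =
        projPerp ((h0.posSemidef.sqrt)⁻¹ * Et) * ((h0.posSemidef.sqrt)⁻¹ * Z) * PC :=
  rao_whitening_identity_general N K M t r hK hJ Sc hS Z
end
end

section
/- Let S ∈ ℂ^{N×N} be Hermitian positive definite, z ∈ ℂ^N, and A ∈ ℂ^{N×r} of full column rank (so A† S⁻¹ A is invertible). Set S₀ = S + z z†. Then S₀ is Hermitian positive definite and z† S⁻¹ A (A† S⁻¹ A)⁻¹ A† S₀⁻¹ z = [ z† S⁻¹ A (A† S⁻¹ A)⁻¹ A† S⁻¹ z ] / (1 + z† S⁻¹ z). In particular this quantity is real, so the Gradient statistic K·Re{z† S⁻¹ A (A† S⁻¹ A)⁻¹ A† S₀⁻¹ z} for adaptive vector-subspace detection of a point-like target is K times Kelly's GLR ratio η = z₁† P_{A₁} z₁ / (1 + z₁† z₁) with z₁ = S^{-1/2}z and A₁ = S^{-1/2}A; hence the Gradient test is statistically equivalent to Kelly's GLRT in this scenario. -/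
/-!
Sherman–Morrison: `S₀ (S⁻¹ z) = (1 + zᴴ S⁻¹ z) z`, so `S₀⁻¹ z = S⁻¹ z / (1 + zᴴ S⁻¹ z)`, which is
the formula for `g`. Its numerator and denominator are Hermitian forms, so `g` is real. Whitening
with the Hermitian square root `W = S^{-1/2}` (so `W W = S⁻¹`) turns `z₁ᴴ z₁` into `zᴴ S⁻¹ z` and
`W P_{A₁} W` into `S⁻¹ A (Aᴴ S⁻¹ A)⁻¹ Aᴴ S⁻¹`, hence `η = g`.
-/

open Matrix
open scoped ComplexOrder

noncomputable section

namespace Matrix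

variable {n : Type*} [Fintype n]

theorem inv_add_vecMulVec_mulVec [DecidableEq n] {K : Type*} [Field K] {S : Matrix n n K}
    {u v : n → K} (hS : IsUnit S) (hS' : IsUnit (S + vecMulVec u v)) :
    (S + vecMulVec u v)⁻¹ *ᵥ u = (1 + v ⬝ᵥ (S⁻¹ *ᵥ u))⁻¹ • (S⁻¹ *ᵥ u) := by
  set c := v ⬝ᵥ (S⁻¹ *ᵥ u)
  have hS_inv : S * S⁻¹ = 1 := mul_nonsing_inv _ ((isUnit_iff_isUnit_det S).mp hS)
  have hSu : (S + vecMulVec u v) *ᵥ (S⁻¹ *ᵥ u) = (1 + c) • u := by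
    rw [add_mulVec, mulVec_mulVec, hS_inv, one_mulVec, vecMulVec_mulVec, op_smul_eq_smul,
      add_smul, one_smul]
  have h : S⁻¹ *ᵥ u = (1 + c) • ((S + vecMulVec u v)⁻¹ *ᵥ u) := by
    rw [← mulVec_smul, ← hSu, mulVec_mulVec,
      nonsing_inv_mul _ ((isUnit_iff_isUnit_det _).mp hS'), one_mulVec]
  rcases eq_or_ne (1 + c) 0 with hc | hc
  · -- then `S⁻¹ u = 0`, so `u = 0` and both sides vanish (the right one as `0⁻¹ • 0`)
    have hu : u = 0 := by
      rw [hc, zero_smul] at h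
      rw [← one_mulVec u, ← hS_inv, ← mulVec_mulVec, h, mulVec_zero]
    simp [hu]
  · rw [h, smul_smul, inv_mul_cancel₀ hc, one_smul]

section StarRing

variable {α : Type*} [CommRing α] [StarRing α]

theorem IsHermitian.isSelfAdjoint_star_dotProduct_mulVec {M : Matrix n n α} (hM : M.IsHermitian)
    (x : n → α) : IsSelfAdjoint (star x ⬝ᵥ M *ᵥ x) := by
  rw [IsSelfAdjoint, ← star_dotProduct, star_mulVec, hM.eq, dotProduct_mulVec]

theorem IsHermitian.star_mulVec_dotProduct_mulVec {W : Matrix n n α} (hW : W.IsHermitian)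
    (M : Matrix n n α) (x : n → α) :
    star (W *ᵥ x) ⬝ᵥ M *ᵥ W *ᵥ x = star x ⬝ᵥ (W * M * W) *ᵥ x := by
  rw [star_mulVec, hW.eq, ← dotProduct_mulVec, mulVec_mulVec, mulVec_mulVec, Matrix.mul_assoc]

theorem IsHermitian.star_mulVec_dotProduct_mulVec_self [DecidableEq n] {W : Matrix n n α}
    (hW : W.IsHermitian) (x : n → α) :
    star (W *ᵥ x) ⬝ᵥ W *ᵥ x = star x ⬝ᵥ (W * W) *ᵥ x := by
  simpa using hW.star_mulVec_dotProduct_mulVec 1 x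

end StarRing

section RCLike

variable {𝕜 : Type*} [RCLike 𝕜]

theorem IsHermitian.mul_mul_inv_mul_mul {m : Type*} [Fintype m] [DecidableEq m]
    {M : Matrix n n 𝕜} (hM : M.IsHermitian) (A : Matrix n m 𝕜) :
    (M * A * (Aᴴ * M * A)⁻¹ * Aᴴ * M).IsHermitian := by
  simp only [IsHermitian, conjTranspose_mul, conjTranspose_nonsing_inv,
    conjTranspose_conjTranspose, hM.eq, Matrix.mul_assoc]

variable [DecidableEq n]

theorem IsHermitian.isHermitian_cfc {S : Matrix n n 𝕜} (hS : S.IsHermitian) (f : ℝ → ℝ) :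
    (hS.cfc f).IsHermitian := by
  rw [← hS.cfc_eq]
  exact cfc_predicate f S

theorem PosSemidef.cfc_sqrt_mul_self_s13 {S : Matrix n n 𝕜} (hS : S.PosSemidef) :
    hS.1.cfc Real.sqrt * hS.1.cfc Real.sqrt = S := by
  rw [← hS.1.cfc_eq, ← cfc_mul _ _ S]
  conv_rhs => rw [← cfc_id' ℝ S hS.1]
  refine cfc_congr fun x hx => ?_
  rw [hS.1.spectrum_real_eq_range_eigenvalues] at hx
  obtain ⟨i, rfl⟩ := hx
  exact Real.mul_self_sqrt (hS.eigenvalues_nonneg i)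

end RCLike

theorem IsHermitian.mul_proj_mul [DecidableEq n] {m : Type*} [Fintype m] [DecidableEq m]
    {W : Matrix n n ℂ} (hW : W.IsHermitian) (A : Matrix n m ℂ) :
    W * proj (W * A) * W = W * W * A * (Aᴴ * (W * W) * A)⁻¹ * Aᴴ * (W * W) := by
  simp only [proj, conjTranspose_mul, hW.eq, Matrix.mul_assoc]

end Matrix

theorem gradient_equals_kelly_glr_pointlike_general
    (N r : ℕ)
    (S : Matrix (Fin N) (Fin N) ℂ) (hS : S.PosDef)
    (z : Fin N → ℂ)
    (A : Matrix (Fin N) (Fin r) ℂ) :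
    let S0 : Matrix (Fin N) (Fin N) ℂ := S + vecMulVec z (star z)
    let g : ℂ := star z ⬝ᵥ ((S⁻¹ * A * (Aᴴ * S⁻¹ * A)⁻¹ * Aᴴ * S0⁻¹) *ᵥ z)
    let Shalf : Matrix (Fin N) (Fin N) ℂ := (hS.posSemidef.1.eigenvectorUnitary : Matrix (Fin N) (Fin N) ℂ) *
      diagonal ((↑) ∘ Real.sqrt ∘ hS.posSemidef.1.eigenvalues) *
      (star hS.posSemidef.1.eigenvectorUnitary : Matrix (Fin N) (Fin N) ℂ)
    let z1 : Fin N → ℂ := Shalf⁻¹ *ᵥ z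
    let A1 : Matrix (Fin N) (Fin r) ℂ := Shalf⁻¹ * A
    let η : ℂ := (star z1 ⬝ᵥ (proj A1 *ᵥ z1)) / (1 + star z1 ⬝ᵥ z1)
    S0.PosDef ∧
      g = (star z ⬝ᵥ ((S⁻¹ * A * (Aᴴ * S⁻¹ * A)⁻¹ * Aᴴ * S⁻¹) *ᵥ z)) /
            (1 + star z ⬝ᵥ (S⁻¹ *ᵥ z)) ∧
      g.im = 0 ∧
      ∀ Kc : ℝ, ((Kc * g.re : ℝ) : ℂ) = (Kc : ℂ) * η := by
  intro S0 g Shalf z1 A1 η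
  have hS0 : S0.PosDef := hS.add_posSemidef (posSemidef_vecMulVec_self_star z)
  have hg : g = (star z ⬝ᵥ ((S⁻¹ * A * (Aᴴ * S⁻¹ * A)⁻¹ * Aᴴ * S⁻¹) *ᵥ z)) /
      (1 + star z ⬝ᵥ (S⁻¹ *ᵥ z)) := by
    rw [div_eq_inv_mul, ← smul_eq_mul, ← dotProduct_smul, ← mulVec_mulVec, ← mulVec_smul,
      ← inv_add_vecMulVec_mulVec hS.isUnit hS0.isUnit, mulVec_mulVec]
  have hg_real : IsSelfAdjoint g := by
    rw [hg]
    exact ((hS.inv.1.mul_mul_inv_mul_mul A).isSelfAdjoint_star_dotProduct_mulVec z).div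
      ((IsSelfAdjoint.one ℂ).add (hS.inv.1.isSelfAdjoint_star_dotProduct_mulVec z))
  -- `Shalf` is by definition `hS.posSemidef.1.cfc Real.sqrt`
  have hW : (Shalf⁻¹).IsHermitian := (hS.posSemidef.1.isHermitian_cfc Real.sqrt).inv
  have hWW : Shalf⁻¹ * Shalf⁻¹ = S⁻¹ := by
    rw [← Matrix.mul_inv_rev]
    exact congrArg _ hS.posSemidef.cfc_sqrt_mul_self_s13
  have hη : η = g := by
    rw [hg]
    simp only [η, z1, A1]
    rw [hW.star_mulVec_dotProduct_mulVec, hW.mul_proj_mul, hWW,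
      hW.star_mulVec_dotProduct_mulVec_self, hWW]
  refine ⟨hS0, hg, Complex.conj_eq_iff_im.mp hg_real, fun Kc => ?_⟩
  rw [hη, Complex.ofReal_mul, Complex.conj_eq_iff_re.mp hg_real]

/-- Eq. (GT (vector subspace)) of the paper: with `S₀ = S + z zᴴ`,
`zᴴ S⁻¹ A (Aᴴ S⁻¹ A)⁻¹ Aᴴ S₀⁻¹ z = [zᴴ S⁻¹ A (Aᴴ S⁻¹ A)⁻¹ Aᴴ S⁻¹ z] / (1 + zᴴ S⁻¹ z)`; in
particular the quantity is real and the Gradient statistic is `K` times Kelly's GLR ratio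
`η = z₁ᴴ P_{A₁} z₁ / (1 + z₁ᴴ z₁)` — the Gradient test is statistically equivalent to
Kelly's GLRT for point-like targets. -/
theorem gradient_equals_kelly_glr_pointlike
    (N r : ℕ) (hN : 0 < N) (hr : 0 < r)
    (S : Matrix (Fin N) (Fin N) ℂ) (hS : S.PosDef)
    (z : Fin N → ℂ)
    (A : Matrix (Fin N) (Fin r) ℂ) (hA : A.rank = r) :
    let S0 : Matrix (Fin N) (Fin N) ℂ := S + vecMulVec z (star z)
    let g : ℂ := star z ⬝ᵥ ((S⁻¹ * A * (Aᴴ * S⁻¹ * A)⁻¹ * Aᴴ * S0⁻¹) *ᵥ z)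
    let Shalf : Matrix (Fin N) (Fin N) ℂ := (hS.posSemidef.1.eigenvectorUnitary : Matrix (Fin N) (Fin N) ℂ) *
      diagonal ((↑) ∘ Real.sqrt ∘ hS.posSemidef.1.eigenvalues) *
      (star hS.posSemidef.1.eigenvectorUnitary : Matrix (Fin N) (Fin N) ℂ)
    let z1 : Fin N → ℂ := Shalf⁻¹ *ᵥ z
    let A1 : Matrix (Fin N) (Fin r) ℂ := Shalf⁻¹ * A
    let η : ℂ := (star z1 ⬝ᵥ (proj A1 *ᵥ z1)) / (1 + star z1 ⬝ᵥ z1)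
    S0.PosDef ∧
      g = (star z ⬝ᵥ ((S⁻¹ * A * (Aᴴ * S⁻¹ * A)⁻¹ * Aᴴ * S⁻¹) *ᵥ z)) /
            (1 + star z ⬝ᵥ (S⁻¹ *ᵥ z)) ∧
      g.im = 0 ∧
      ∀ Kc : ℝ, ((Kc * g.re : ℝ) : ℂ) = (Kc : ℂ) * η :=
  gradient_equals_kelly_glr_pointlike_general N r S hS z A
end
end
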